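/- arXiv:2011.02187 — 8 statements merged into one kernel-verified Lean document; each statement's English description precedes it below -/
import Mathlib

section
/- For integers d ≥ 1 and 0 ≤ κ ≤ d, with m = κ, one has (1/2^d)·∑_{ε∈{±1}^d} ε_1⋯ε_κ (ε_1+⋯+ε_d)^κ = κ!. -/
/-!
Expanding `(∑ i, ε i) ^ κ` as a sum over maps `g : Fin κ → Fin d` turns each term into a
monomial `∏ i, ε i ^ e i` with `e i = [i < κ] + #g⁻¹(i)`. Averaged over all sign vectors such a
monomial gives `1` if every exponent is even and `0` otherwise. Since the fibres of `g` have total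
size `κ`, all exponents are even exactly when `g` is a bijection onto `{i | i < κ}`, and there are
`κ!` of these.
-/

open Finset

lemma sum_units_int_pow (e : ℕ) : ∑ s : ℤˣ, (s : ℤ) ^ e = if Even e then 2 else 0 := by
  rw [show (univ : Finset ℤˣ) = {1, -1} from rfl]
  rcases Nat.even_or_odd e with he | he
  · simp [he, he.neg_one_pow]
  · simp [he.neg_one_pow, Nat.not_even_iff_odd.mpr he]

section SignVectors

variable {ι α : Type*} [DecidableEq ι] [Fintype α]

lemma card_fiber_val_comp_equiv {S : Finset ι} (e : α ≃ S) (i : ι) :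
    #{a | (e a : ι) = i} = if i ∈ S then 1 else 0 := by
  split_ifs with hi
  · rw [card_eq_one]
    refine ⟨e.symm ⟨i, hi⟩, ?_⟩
    ext a
    simp [Equiv.eq_symm_apply, Subtype.ext_iff]
  · rw [card_eq_zero, filter_eq_empty_iff]
    rintro a - rfl
    exact hi (e a).2

lemma exists_equiv_of_card_fiber_eq_boole {S : Finset ι} (hS : #S = Fintype.card α) (g : α → ι)
    (hg : ∀ i, #{a | g a = i} = if i ∈ S then 1 else 0) :
    ∃ e : α ≃ S, (↑) ∘ e = g := by
  have hmem : ∀ a, g a ∈ S := by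
    intro a
    by_contra ha
    have := hg (g a)
    rw [if_neg ha, card_eq_zero, filter_eq_empty_iff] at this
    exact this (mem_univ a) rfl
  have hinj : Function.Injective g := by
    intro a b hab
    have := (hg (g a)).le
    rw [if_pos (hmem a)] at this
    exact card_le_one.1 this a (by simp) b (by simp [hab])
  refine ⟨Equiv.ofBijective (fun a => ⟨g a, hmem a⟩)
    ((Fintype.bijective_iff_injective_and_card _).2 ⟨?_, by simp [hS]⟩), rfl⟩
  exact fun a b hab => hinj (congrArg Subtype.val hab)

variable [Fintype ι]

lemma sum_sign_vectors_prod_pow (e : ι → ℕ) :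
    ∑ ε : ι → ℤˣ, ∏ i, (ε i : ℤ) ^ e i =
      if ∀ i, Even (e i) then 2 ^ Fintype.card ι else 0 := by
  rw [← Fintype.prod_sum (fun i (s : ℤˣ) => (s : ℤ) ^ e i)]
  simp_rw [sum_units_int_pow, Fintype.prod_ite_zero, prod_const, card_univ]

lemma prod_mul_prod_comp_eq_prod_pow {M : Type*} [CommMonoid M] (S : Finset ι) (x : ι → M)
    (g : α → ι) :
    (∏ i ∈ S, x i) * ∏ a, x (g a) =
      ∏ i, x i ^ ((if i ∈ S then 1 else 0) + #{a | g a = i}) := by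
  simp_rw [pow_add, prod_mul_distrib, pow_ite, pow_one, pow_zero, prod_ite_mem, univ_inter,
    ← prod_fiberwise' univ g x, prod_const]

lemma even_boole_add_card_fiber_iff {S : Finset ι} (hS : #S = Fintype.card α) (g : α → ι) :
    (∀ i, Even ((if i ∈ S then 1 else 0) + #{a | g a = i})) ↔
      ∀ i, #{a | g a = i} = if i ∈ S then 1 else 0 := by
  refine ⟨fun heven => ?_, fun hfiber i => by rw [hfiber i]; exact ⟨_, rfl⟩⟩
  have hle : ∀ i ∈ univ, (if i ∈ S then 1 else 0) ≤ #{a | g a = i} := by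
    intro i _
    split_ifs with hi
    · have := heven i
      rw [if_pos hi] at this
      exact Nat.one_le_iff_ne_zero.2 fun h => by simp [h] at this
    · exact Nat.zero_le _
  have hsum : ∑ i, (if i ∈ S then 1 else 0) = ∑ i, #{a | g a = i} := by
    rw [sum_boole, sum_card_fiberwise_eq_card_filter]
    simp [hS]
  exact fun i => ((sum_eq_sum_iff_of_le hle).1 hsum i (mem_univ i)).symm

lemma card_filter_card_fiber_eq_boole [DecidableEq α] {S : Finset ι}
    (hS : #S = Fintype.card α) :
    #{g : α → ι | ∀ i, #{a | g a = i} = if i ∈ S then 1 else 0} = (Fintype.card α).factorial := by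
  rw [← Fintype.card_equiv (Fintype.equivOfCardEq (by simp [hS]) : α ≃ S), ← card_univ]
  refine (card_bij (fun (e : α ≃ S) _ => ((↑) ∘ e : α → ι)) ?_ ?_ ?_).symm
  · exact fun e _ => mem_filter.2 ⟨mem_univ _, card_fiber_val_comp_equiv e⟩
  · exact fun e₁ _ e₂ _ h => Equiv.ext fun a => Subtype.ext (congrFun h a)
  · intro g hg
    obtain ⟨e, rfl⟩ := exists_equiv_of_card_fiber_eq_boole hS g (mem_filter.1 hg).2
    exact ⟨e, mem_univ _, rfl⟩

theorem sum_sign_vectors_prod_mul_sum_pow_card (S : Finset ι) :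
    ∑ ε : ι → ℤˣ, (∏ i ∈ S, (ε i : ℤ)) * (∑ i, (ε i : ℤ)) ^ #S =
      2 ^ Fintype.card ι * (#S).factorial := by
  simp_rw [Fintype.sum_pow, mul_sum]
  rw [sum_comm]
  simp_rw [prod_mul_prod_comp_eq_prod_pow, sum_sign_vectors_prod_pow]
  rw [sum_ite, sum_const_zero, add_zero, sum_const, nsmul_eq_mul, mul_comm]
  have hS : #S = Fintype.card (Fin #S) := (Fintype.card_fin _).symm
  rw [filter_congr fun g _ => even_boole_add_card_fiber_iff hS g,
    card_filter_card_fiber_eq_boole hS, Fintype.card_fin]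

end SignVectors

theorem sign_moment_kappa_general (d κ : ℕ) (hκ : κ ≤ d) :
    (1 / 2 ^ d : ℚ) * ∑ ε : Fin d → ℤˣ,
        (∏ i ∈ Finset.univ.filter (fun i : Fin d => (i : ℕ) < κ), ((ε i : ℤ) : ℚ)) *
          (∑ i, ((ε i : ℤ) : ℚ)) ^ κ = (Nat.factorial κ : ℚ) := by
  have hcard : #{i : Fin d | (i : ℕ) < κ} = κ := by
    rw [Fin.card_filter_val_lt, min_eq_right hκ]
  have h := sum_sign_vectors_prod_mul_sum_pow_card {i : Fin d | (i : ℕ) < κ}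
  rw [hcard, Fintype.card_fin] at h
  have h' := congrArg (Int.cast : ℤ → ℚ) h
  push_cast at h'
  rw [h']
  field_simp

/-- For `m = κ` the normalized signed moment sum equals `κ!`. -/
theorem sign_moment_kappa (d κ : ℕ) (hd : 1 ≤ d) (hκ : κ ≤ d) :
    (1 / 2 ^ d : ℚ) * ∑ ε : Fin d → ℤˣ,
        (∏ i ∈ Finset.univ.filter (fun i : Fin d => (i : ℕ) < κ), ((ε i : ℤ) : ℚ)) *
          (∑ i, ((ε i : ℤ) : ℚ)) ^ κ = (Nat.factorial κ : ℚ) :=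
  sign_moment_kappa_general d κ hκ
end

section
/- Define λ_{d,κ,n} = (1/2^d)·∑_{ε∈{±1}^d} ε_1⋯ε_κ · C_n^{d/2−1}((ε_1+⋯+ε_d)/d) / C_n^{d/2−1}(1), where C_n^{α} is the Gegenbauer polynomial of degree n and parameter α. Then λ_{d,κ,n} = 0 whenever 0 ≤ n < κ or n − κ is odd. -/
open Polynomial

/-- The Gegenbauer (ultraspherical) polynomial `C_n^α`, defined by the standard
three-term recurrence `n C_n = 2(n+α-1) X C_{n-1} - (n+2α-2) C_{n-2}`. -/
noncomputable def gegenbauer (α : ℚ) : ℕ → Polynomial ℚ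
  | 0 => 1
  | 1 => C (2 * α) * X
  | n + 2 =>
      C (2 * ((n : ℚ) + 1 + α) / ((n : ℚ) + 2)) * X * gegenbauer α (n + 1) -
        C (((n : ℚ) + 2 * α) / ((n : ℚ) + 2)) * gegenbauer α n

/-- The eigenvalue `λ_{d,κ,n}`. -/
noncomputable def lam (d κ n : ℕ) : ℚ :=
  (1 / 2 ^ d) * ∑ ε : Fin d → ℤˣ,
    (∏ i ∈ Finset.univ.filter (fun i : Fin d => (i : ℕ) < κ), ((ε i : ℤ) : ℚ)) *
      ((gegenbauer ((d : ℚ) / 2 - 1) n).eval ((∑ i, ((ε i : ℤ) : ℚ)) / d) /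
        (gegenbauer ((d : ℚ) / 2 - 1) n).eval 1)

/-! Replacing `ε` by `-ε` multiplies the summand by `(-1)^(κ+n)`, since `C_n^α` has the parity
of `n`; so the sum vanishes when `n - κ` is odd. When `n < κ`, expand the polynomial in
`ε₁ + ⋯ + ε_d` into monomials `ε_{f 1} ⋯ ε_{f m}` with `m ≤ n < κ`: some `i < κ` is missed by `f`,
and flipping the sign of `ε_i` alone negates that monomial times `ε₁ ⋯ ε_κ`. -/

lemma Fintype.sum_eq_zero_of_comp_equiv_eq_neg {α R : Type*} [Fintype α] [NonAssocRing R]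
    [NoZeroDivisors R] [CharZero R] (e : α ≃ α) {f : α → R} (h : ∀ a, f (e a) = -f a) :
    ∑ a, f a = 0 := by
  have := e.sum_comp f
  rw [Finset.sum_congr rfl fun a _ => h a, Finset.sum_neg_distrib] at this
  exact CharZero.neg_eq_self_iff.mp this

theorem gegenbauer_eval_neg (α : ℚ) : ∀ (n : ℕ) (x : ℚ),
    (gegenbauer α n).eval (-x) = (-1) ^ n * (gegenbauer α n).eval x
  | 0, x => by simp [gegenbauer]
  | 1, x => by simp [gegenbauer]
  | n + 2, x => by
    simp only [gegenbauer, eval_sub, eval_mul, eval_C, eval_X, gegenbauer_eval_neg α n x,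
      gegenbauer_eval_neg α (n + 1) x]
    ring

theorem gegenbauer_natDegree_le (α : ℚ) : ∀ n : ℕ, (gegenbauer α n).natDegree ≤ n
  | 0 => by simp [gegenbauer]
  | 1 => (natDegree_C_mul_le _ _).trans natDegree_X_le
  | n + 2 => by
    have h₁ : (C (2 * ((n : ℚ) + 1 + α) / ((n : ℚ) + 2)) * X * gegenbauer α (n + 1)).natDegree
        ≤ 1 + (n + 1) :=
      natDegree_mul_le_of_le ((natDegree_C_mul_le _ _).trans natDegree_X_le)
        (gegenbauer_natDegree_le α (n + 1))
    have h₂ := (natDegree_C_mul_le (((n : ℚ) + 2 * α) / ((n : ℚ) + 2)) _).trans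
      (gegenbauer_natDegree_le α n)
    exact (natDegree_sub_le_of_le h₁ h₂).trans (by omega)

open Finset

section SignSums

variable {ι : Type*} [Fintype ι] [DecidableEq ι]

theorem sum_prod_mul_eq_zero_of_neg (S : Finset ι) {φ : ℚ → ℚ} {n : ℕ}
    (hφ : ∀ x, φ (-x) = (-1) ^ n * φ x) (hn : n % 2 ≠ #S % 2) :
    ∑ ε : ι → ℤˣ, (∏ i ∈ S, ((ε i : ℤ) : ℚ)) * φ (∑ i, ((ε i : ℤ) : ℚ)) = 0 := by
  refine Fintype.sum_eq_zero_of_comp_equiv_eq_neg (Equiv.neg _) fun ε => ?_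
  have hsign : (-1 : ℚ) ^ #S * (-1) ^ n = -1 := by
    rw [← pow_add]
    exact Odd.neg_one_pow (Nat.odd_iff.mpr (by omega))
  simp only [Equiv.neg_apply, Pi.neg_apply, Units.val_neg, Int.cast_neg, prod_neg,
    sum_neg_distrib, hφ]
  linear_combination (∏ i ∈ S, ((ε i : ℤ) : ℚ)) * φ (∑ i, ((ε i : ℤ) : ℚ)) * hsign

theorem sum_prod_mul_sum_pow_eq_zero (S : Finset ι) {m : ℕ} (hm : m < #S) :
    ∑ ε : ι → ℤˣ, (∏ i ∈ S, ((ε i : ℤ) : ℚ)) * (∑ i, ((ε i : ℤ) : ℚ)) ^ m = 0 := by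
  simp_rw [Fintype.sum_pow, mul_sum]
  rw [sum_comm]
  refine sum_eq_zero fun f _ => ?_
  obtain ⟨i, hiS, hif⟩ : ∃ i ∈ S, i ∉ univ.image f :=
    exists_mem_notMem_of_card_lt_card (card_image_le.trans_lt (by simpa using hm))
  refine Fintype.sum_eq_zero_of_comp_equiv_eq_neg (Equiv.mulRight (Pi.mulSingle i (-1)))
    fun ε => ?_
  have hflip : ∀ k, ((((ε * Pi.mulSingle i (-1) : ι → ℤˣ)) k : ℤ) : ℚ) =
      (if k = i then -1 else 1) * ((ε k : ℤ) : ℚ) := by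
    intro k; by_cases hk : k = i <;> simp [hk]
  have hfix : ∀ j, f j ≠ i := fun j hj => hif (hj ▸ mem_image_of_mem f (mem_univ j))
  simp only [Equiv.coe_mulRight, hflip, prod_mul_distrib, prod_ite_eq' S i, if_pos hiS, hfix,
    if_false, one_mul]
  ring

theorem sum_prod_mul_eval_sum_eq_zero (S : Finset ι) {p : ℚ[X]} (hp : p.natDegree < #S) :
    ∑ ε : ι → ℤˣ, (∏ i ∈ S, ((ε i : ℤ) : ℚ)) * p.eval (∑ i, ((ε i : ℤ) : ℚ)) = 0 := by
  simp_rw [eval_eq_sum_range, mul_sum]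
  rw [sum_comm]
  refine sum_eq_zero fun m hm => ?_
  simp_rw [mul_left_comm _ (p.coeff m), ← mul_sum]
  rw [sum_prod_mul_sum_pow_eq_zero S (by rw [mem_range] at hm; omega), mul_zero]

end SignSums

theorem lam_eq_zero_general (d κ n : ℕ) (hκ : κ ≤ d)
    (h : n < κ ∨ n % 2 ≠ κ % 2) : lam d κ n = 0 := by
  rw [lam, mul_eq_zero]
  right
  set P := gegenbauer ((d : ℚ) / 2 - 1) n
  set q : ℚ[X] := C (P.eval 1)⁻¹ * P.comp (C (d : ℚ)⁻¹ * X)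
  have hq : ∀ x, q.eval x = P.eval (x / d) / P.eval 1 := fun x => by
    simp only [q, eval_mul, eval_C, eval_comp, eval_X]
    rw [div_eq_inv_mul, div_eq_inv_mul]
  set S := univ.filter fun i : Fin d => (i : ℕ) < κ
  have hS : #S = κ := by simp [S, Fin.card_filter_val_lt, hκ]
  simp_rw [← hq]
  rcases h with hn | hn
  · refine sum_prod_mul_eval_sum_eq_zero S (lt_of_le_of_lt ?_ (hS ▸ hn))
    calc q.natDegree ≤ P.natDegree * (C (d : ℚ)⁻¹ * X).natDegree :=
          (natDegree_C_mul_le _ _).trans natDegree_comp_le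
      _ ≤ n * 1 := Nat.mul_le_mul (gegenbauer_natDegree_le _ n)
          ((natDegree_C_mul_le _ _).trans natDegree_X_le)
      _ = n := mul_one n
  · refine sum_prod_mul_eq_zero_of_neg S (φ := q.eval) (fun x => ?_) (hS ▸ hn)
    rw [hq, hq, neg_div, gegenbauer_eval_neg, mul_div_assoc]

/-- `λ_{d,κ,n} = 0` whenever `n < κ` or `n - κ` is odd. -/
theorem lam_eq_zero (d κ n : ℕ) (hd : 3 ≤ d) (hκ : κ ≤ d)
    (h : n < κ ∨ n % 2 ≠ κ % 2) : lam d κ n = 0 :=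
  lam_eq_zero_general d κ n hκ h
end

section
/- With λ_{d,κ,n} as defined via Gegenbauer polynomials, λ_{d,κ,κ} = 2^κ κ! (d/2−1)_κ / (d^κ (d−2)_κ), where (x)_κ denotes the rising factorial (Pochhammer symbol). -/
/-!
With `q(s) = C_κ^α(s/d)`, `α = d/2 - 1`, the number `2^d C_κ^α(1) λ_{d,κ,κ}` is the signed sum
`∑_ε ε_1⋯ε_κ q(ε_1+⋯+ε_d)`. Summing out `ε_1` replaces `q` by its central difference
`q(x+1) - q(x-1)`, which lowers the degree by one and multiplies the top coefficient by twice
the degree. After `κ` such steps the constant `2^κ κ! [x^κ] q` is left, to be summed over the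
`2^(d-κ)` remaining signs. The top coefficient `2^κ (α)_κ / κ!` of `C_κ^α` and the value
`C_κ^α(1) = (2α)_κ / κ!` then give the formula.
-/

open Polynomial

namespace Polynomial

variable {R : Type*} [CommRing R]

noncomputable def centralDiff (p : R[X]) : R[X] := taylor 1 p - taylor (-1) p

theorem eval_centralDiff (p : R[X]) (s : R) :
    (centralDiff p).eval s = p.eval (s + 1) - p.eval (s - 1) := by
  simp [centralDiff, taylor_eval, sub_eq_add_neg]

theorem coeff_centralDiff {p : R[X]} {n : ℕ} (hp : p.natDegree ≤ n + 1) :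
    (centralDiff p).coeff n = 2 * (n + 1) * p.coeff (n + 1) := by
  have hlin : (hasseDeriv n p).natDegree ≤ 1 := (natDegree_hasseDeriv_le p n).trans (by omega)
  have hslope : (hasseDeriv n p).coeff 1 = (n + 1) * p.coeff (n + 1) := by
    rw [hasseDeriv_coeff, add_comm 1 n, Nat.choose_succ_self_right]
    push_cast; ring
  rw [centralDiff, coeff_sub, taylor_coeff, taylor_coeff, eq_X_add_C_of_natDegree_le_one hlin]
  simp only [eval_add, eval_mul, eval_C, eval_X, hslope]
  ring

theorem natDegree_centralDiff_le {p : R[X]} {n : ℕ} (hp : p.natDegree ≤ n + 1) :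
    (centralDiff p).natDegree ≤ n := by
  refine natDegree_le_iff_coeff_eq_zero.mpr fun m hm => ?_
  rw [coeff_centralDiff (hp.trans (by omega)),
    coeff_eq_zero_of_natDegree_lt (hp.trans_lt (by omega)), mul_zero]

end Polynomial

section SignedSum

variable {R : Type*} [CommRing R]

noncomputable def signedSum (d κ : ℕ) (p : R[X]) : R :=
  ∑ ε : Fin d → ℤˣ,
    (∏ i ∈ Finset.univ.filter (fun i : Fin d => (i : ℕ) < κ), ((ε i : ℤ) : R)) *
      p.eval (∑ i, ((ε i : ℤ) : R))

theorem signedSum_zero_C (d : ℕ) (c : R) : signedSum d 0 (C c) = 2 ^ d * c := by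
  simp [signedSum, Fintype.card_units_int]

theorem signedSum_succ_succ (d κ : ℕ) (p : R[X]) :
    signedSum (d + 1) (κ + 1) p = signedSum d κ (centralDiff p) := by
  rw [signedSum, ← (Fin.consEquiv fun _ => ℤˣ).sum_comp, Fintype.sum_prod_type, Finset.sum_comm]
  refine Finset.sum_congr rfl fun ε _ => ?_
  simp only [Fin.consEquiv_apply, Finset.prod_filter, Fin.prod_univ_succ, Fin.sum_univ_succ,
    Fin.cons_zero, Fin.cons_succ, Fin.val_zero, Fin.val_succ, Nat.zero_lt_succ, if_true,
    Nat.succ_lt_succ_iff, eval_centralDiff]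
  rw [show (Finset.univ : Finset ℤˣ) = {1, -1} from rfl, Finset.sum_pair (by decide)]
  push_cast
  rw [add_comm (1 : R), neg_add_eq_sub]
  ring

theorem signedSum_eq_coeff {d κ : ℕ} (hκ : κ ≤ d) {p : R[X]} (hp : p.natDegree ≤ κ) :
    signedSum d κ p = 2 ^ d * κ.factorial * p.coeff κ := by
  induction κ generalizing d p with
  | zero =>
    rw [eq_C_of_natDegree_le_zero hp, signedSum_zero_C]
    simp
  | succ κ ih =>
    obtain ⟨d, rfl⟩ := Nat.exists_eq_add_of_le' (Nat.one_le_of_lt hκ)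
    rw [signedSum_succ_succ, ih (by omega) (natDegree_centralDiff_le hp), coeff_centralDiff hp,
      Nat.factorial_succ]
    push_cast
    ring

end SignedSum

section Gegenbauer

open Finset

theorem natDegree_gegenbauer_le (α : ℚ) (n : ℕ) : (gegenbauer α n).natDegree ≤ n := by
  induction n using Nat.twoStepInduction with
  | zero => simp [gegenbauer]
  | one => exact (natDegree_C_mul_le _ _).trans natDegree_X_le
  | more n ih₀ ih₁ =>
    rw [gegenbauer]
    refine (natDegree_sub_le _ _).trans (max_le ?_ ?_)
    · rw [mul_assoc]
      exact (natDegree_C_mul_le _ _).trans (natDegree_mul_le.trans (by rw [natDegree_X]; omega))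
    · exact (natDegree_C_mul_le _ _).trans (by omega)

theorem coeff_gegenbauer_self (α : ℚ) (n : ℕ) :
    (gegenbauer α n).coeff n = 2 ^ n * (∏ i ∈ range n, (α + i)) / n.factorial := by
  induction n using Nat.twoStepInduction with
  | zero => simp [gegenbauer]
  | one => simp [gegenbauer]
  | more n _ ih =>
    rw [gegenbauer, coeff_sub, mul_assoc, coeff_C_mul, coeff_C_mul, coeff_X_mul, ih,
      coeff_eq_zero_of_natDegree_lt ((natDegree_gegenbauer_le α n).trans_lt (by omega))]
    simp only [prod_range_succ, Nat.factorial_succ]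
    push_cast
    field_simp
    ring

theorem eval_one_gegenbauer (α : ℚ) (n : ℕ) :
    (gegenbauer α n).eval 1 = (∏ i ∈ range n, (2 * α + i)) / n.factorial := by
  induction n using Nat.twoStepInduction with
  | zero => simp [gegenbauer]
  | one => simp [gegenbauer]
  | more n ih₀ ih₁ =>
    rw [gegenbauer]
    simp only [eval_sub, eval_mul, eval_C, eval_X, ih₀, ih₁, prod_range_succ,
      Nat.factorial_succ]
    push_cast
    field_simp
    ring

end Gegenbauer

theorem lam_eq_signedSum (d κ n : ℕ) :
    lam d κ n = signedSum d κ ((gegenbauer ((d : ℚ) / 2 - 1) n).comp (C (d : ℚ)⁻¹ * X)) /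
      (2 ^ d * (gegenbauer ((d : ℚ) / 2 - 1) n).eval 1) := by
  simp only [lam, signedSum, eval_comp, eval_mul, eval_C, eval_X, inv_mul_eq_div,
    Finset.sum_div, Finset.mul_sum]
  refine Finset.sum_congr rfl fun ε _ => ?_
  ring

theorem lam_kappa_kappa_general (d κ : ℕ) (hκ : κ ≤ d) :
    lam d κ κ =
      2 ^ κ * (Nat.factorial κ : ℚ) *
          (∏ i ∈ Finset.range κ, ((d : ℚ) / 2 - 1 + i)) /
        ((d : ℚ) ^ κ * ∏ i ∈ Finset.range κ, ((d : ℚ) - 2 + i)) := by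
  set α : ℚ := (d : ℚ) / 2 - 1
  have hdeg : ((gegenbauer α κ).comp (C (d : ℚ)⁻¹ * X)).natDegree ≤ κ :=
    natDegree_comp_le.trans <| by
      simpa using Nat.mul_le_mul (natDegree_gegenbauer_le α κ)
        ((natDegree_C_mul_le _ _).trans natDegree_X_le)
  have hrising : ∏ i ∈ Finset.range κ, (2 * α + i) = ∏ i ∈ Finset.range κ, ((d : ℚ) - 2 + i) :=
    Finset.prod_congr rfl fun i _ => by ring
  rw [lam_eq_signedSum, signedSum_eq_coeff hκ hdeg, comp_C_mul_X_coeff, coeff_gegenbauer_self,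
    eval_one_gegenbauer, hrising]
  have : (κ.factorial : ℚ) ≠ 0 := by positivity
  field_simp
  ring

/-- `λ_{d,κ,κ} = 2^κ κ! (d/2-1)_κ / (d^κ (d-2)_κ)`, with rising factorials
`(x)_κ = x(x+1)⋯(x+κ-1)`. -/
theorem lam_kappa_kappa (d κ : ℕ) (hd : 3 ≤ d) (hκ : κ ≤ d) :
    lam d κ κ =
      2 ^ κ * (Nat.factorial κ : ℚ) *
          (∏ i ∈ Finset.range κ, ((d : ℚ) / 2 - 1 + i)) /
        ((d : ℚ) ^ κ * ∏ i ∈ Finset.range κ, ((d : ℚ) - 2 + i)) :=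
  lam_kappa_kappa_general d κ hκ
end

section
/- As formal power series, G_3(w) := (1/8)∑_{ε∈{±1}^3} ε_1ε_2ε_3 (1−(2/3)(ε_1+ε_2+ε_3)w+w^2)^{−1/2} equals w/(4(1−w^2)) − 3/(8√(1−(2/3)w+w^2)) + 3/(8√(1+(2/3)w+w^2)), and its coefficient of w^3 is 5/9. -/
/-!
A power series with constant term `1` is determined by its square (away from characteristic
`2`), so `S ε` is the inverse square root of `1 - (2/3)(ε₁+ε₂+ε₃)w + w²` and depends only on
`ε₁+ε₂+ε₃ ∈ {3, 1, -1, -3}`. Grouping the eight sign vectors by this sum turns `8 G₃` into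
`(1-w)⁻¹ - 3A⁻¹ + 3B⁻¹ - (1+w)⁻¹`, and `(1-w)⁻¹ - (1+w)⁻¹ = 2w/(1-w²)`.

For the coefficient, `(1 - 2xw + w²)^(-1/2) = ∑ Pₙ(x) wⁿ` is the generating function of the
Legendre polynomials, so `[w³] G₃ = (P₃(1) - 3P₃(1/3) + 3P₃(-1/3) - P₃(-1))/8 = 5/9`.
-/

open PowerSeries

namespace PowerSeries

theorem eq_of_sq_eq_sq_of_constantCoeff_eq_one {R : Type*} [CommRing R] [IsDomain R]
    {s t : R⟦X⟧} (h2 : (2 : R) ≠ 0) (hs : constantCoeff s = 1) (ht : constantCoeff t = 1)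
    (h : s ^ 2 = t ^ 2) : s = t := by
  refine (sq_eq_sq_iff_eq_or_eq_neg.mp h).resolve_right fun hst => h2 ?_
  have h1 := congrArg constantCoeff hst
  rw [map_neg, hs, ht] at h1
  linear_combination h1

theorem eq_of_sq_mul_eq_one {R : Type*} [CommRing R] [IsDomain R]
    {s t q : R⟦X⟧} (h2 : (2 : R) ≠ 0) (hs0 : constantCoeff s = 1) (ht0 : constantCoeff t = 1)
    (hs : s ^ 2 * q = 1) (ht : t ^ 2 * q = 1) : s = t :=
  eq_of_sq_eq_sq_of_constantCoeff_eq_one h2 hs0 ht0 <|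
    mul_right_cancel₀ (right_ne_zero_of_mul_eq_one hs) (hs.trans ht.symm)

variable {k : Type*} [Field k]

theorem eq_inv_of_sq_mul_eq_one_of_sq_eq {s t q : k⟦X⟧} (h2 : (2 : k) ≠ 0)
    (hs0 : constantCoeff s = 1) (hs : s ^ 2 * q = 1) (ht0 : constantCoeff t = 1)
    (ht : t ^ 2 = q) : s = t⁻¹ := by
  rw [eq_inv_iff_mul_eq_one (by simp [ht0])]
  exact eq_of_sq_eq_sq_of_constantCoeff_eq_one h2 (by simp [hs0, ht0]) (map_one _)
    (by rw [mul_pow, ht, hs, one_pow])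

theorem inv_one_sub_X_sub_inv_one_add_X :
    ((1 - X)⁻¹ - (1 + X)⁻¹ : k⟦X⟧) = 2 * X * (1 - X ^ 2)⁻¹ := by
  refine (eq_mul_inv_iff_mul_eq (by simp)).mpr ?_
  have hm := PowerSeries.inv_mul_cancel (1 - X : k⟦X⟧) (by simp)
  have hp := PowerSeries.inv_mul_cancel (1 + X : k⟦X⟧) (by simp)
  linear_combination (1 + X) * hm - (1 - X) * hp

theorem coeff_add_two_mul_one_sub_C_mul_X_add_X_sq (f : k⟦X⟧) (x : k) (n : ℕ) :
    coeff (n + 2) (f * (1 - C (2 * x) * X + X ^ 2)) =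
      coeff (n + 2) f - 2 * x * coeff (n + 1) f + coeff n f := by
  simp only [mul_add, mul_sub, mul_one, map_add, map_sub, coeff_mul_X_pow, mul_left_comm f,
    ← mul_assoc, coeff_C_mul, coeff_succ_mul_X]

/-- `s = (1 - 2xX + X²)^(-1/2)` generates the Legendre polynomials; this is `P₃(x)`. -/
theorem coeff_three_of_sq_mul_eq_one {s : k⟦X⟧} {x : k} (h2 : (2 : k) ≠ 0)
    (hs0 : constantCoeff s = 1) (hs : s ^ 2 * (1 - C (2 * x) * X + X ^ 2) = 1) :
    coeff 3 s = (5 * x ^ 3 - 3 * x) / 2 := by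
  have e1 : coeff 1 (s ^ 2 * (1 - C (2 * x) * X + X ^ 2)) = 0 := by rw [hs, coeff_one]; rfl
  have e2 := coeff_add_two_mul_one_sub_C_mul_X_add_X_sq (s ^ 2) x 0
  have e3 := coeff_add_two_mul_one_sub_C_mul_X_add_X_sq (s ^ 2) x 1
  simp only [hs, coeff_one] at e2 e3
  simp only [sq, coeff_mul, Finset.Nat.sum_antidiagonal_succ,
    Finset.HasAntidiagonal.antidiagonal_zero, Finset.sum_singleton, coeff_zero_eq_constantCoeff,
    hs0, map_add, map_sub, map_mul, coeff_one, coeff_zero_C, coeff_succ_C, coeff_zero_X] at e1 e2 e3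
  norm_num at e1 e2 e3
  have hs1 : coeff 1 s = x := mul_left_cancel₀ h2 (by linear_combination e1)
  rw [hs1] at e2 e3
  have hs2 : 2 * coeff 2 s = 3 * x ^ 2 - 1 := by linear_combination -e2
  rw [eq_div_iff h2]
  linear_combination -e3 + x * hs2

end PowerSeries

theorem sum_sign_prod_mul_fin_three {R : Type*} [CommRing R] (f : (Fin 3 → ℤˣ) → R)
    (hf : ∀ ε ε' : Fin 3 → ℤˣ, ∑ i, (ε i : ℤ) = ∑ i, (ε' i : ℤ) → f ε = f ε') :
    ∑ ε : Fin 3 → ℤˣ, (∏ i, ((ε i : ℤ) : R)) * f ε =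
      f ![1, 1, 1] - 3 • f ![1, 1, -1] + 3 • f ![1, -1, -1] - f ![-1, -1, -1] := by
  have huniv : (Finset.univ : Finset (Fin 3 → ℤˣ)) =
      {![1, 1, 1], ![1, 1, -1], ![1, -1, 1], ![1, -1, -1], ![-1, 1, 1], ![-1, 1, -1],
        ![-1, -1, 1], ![-1, -1, -1]} := by
    decide
  rw [huniv]
  simp +decide only [Finset.sum_insert, Finset.sum_singleton, Finset.mem_insert,
    Finset.mem_singleton, not_false_eq_true]
  rw [hf ![1, -1, 1] ![1, 1, -1] (by decide), hf ![-1, 1, 1] ![1, 1, -1] (by decide),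
    hf ![-1, 1, -1] ![1, -1, -1] (by decide), hf ![-1, -1, 1] ![1, -1, -1] (by decide)]
  simp only [Fin.prod_univ_three, Matrix.cons_val_zero, Matrix.cons_val_one, Matrix.cons_val,
    Units.val_one, Units.val_neg, Int.cast_one, Int.cast_neg, nsmul_eq_mul, Nat.cast_ofNat]
  ring

/-- `G₃(w) = (1/8) ∑_{ε∈{±1}³} ε₁ε₂ε₃ (1-(2/3)(ε₁+ε₂+ε₃)w+w²)^{-1/2}
    = w/(4(1-w²)) - 3/(8√(1-(2/3)w+w²)) + 3/(8√(1+(2/3)w+w²))`,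
and its coefficient of `w³` is `5/9`. -/
theorem G3_formula
    (S : (Fin 3 → ℤˣ) → PowerSeries ℚ)
    (hS : ∀ ε : Fin 3 → ℤˣ,
      constantCoeff (S ε) = 1 ∧
        (S ε) ^ 2 * (1 - C ((2 / 3) * ∑ i, ((ε i : ℤ) : ℚ)) * X + X ^ 2) = 1)
    (A B : PowerSeries ℚ)
    (hA1 : constantCoeff A = 1) (hA : A ^ 2 = 1 - C (2 / 3) * X + X ^ 2)
    (hB1 : constantCoeff B = 1) (hB : B ^ 2 = 1 + C (2 / 3) * X + X ^ 2) :
    C (1 / 8) * (∑ ε : Fin 3 → ℤˣ, C (∏ i, ((ε i : ℤ) : ℚ)) * S ε) =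
        C (1 / 4) * X * (1 - X ^ 2)⁻¹ - C (3 / 8) * A⁻¹ + C (3 / 8) * B⁻¹ ∧
      coeff 3 (C (1 / 8) * ∑ ε : Fin 3 → ℤˣ, C (∏ i, ((ε i : ℤ) : ℚ)) * S ε) =
        5 / 9 := by
  have h2 : (2 : ℚ) ≠ 0 := two_ne_zero
  have hsum : ∑ ε : Fin 3 → ℤˣ, C (∏ i, ((ε i : ℤ) : ℚ)) * S ε =
      S ![1, 1, 1] - 3 • S ![1, 1, -1] + 3 • S ![1, -1, -1] - S ![-1, -1, -1] := by
    simp_rw [map_prod, map_intCast]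
    exact sum_sign_prod_mul_fin_three S fun ε ε' h => eq_of_sq_mul_eq_one h2 (hS ε).1 (hS ε').1
      (hS ε).2 (by simpa only [← Int.cast_sum, h] using (hS ε').2)
  have hσ3 : ∑ i, (((![1, 1, 1] : Fin 3 → ℤˣ) i : ℤ) : ℚ) = 3 := by
    norm_num [Fin.sum_univ_succ]
  have hσ1 : ∑ i, (((![1, 1, -1] : Fin 3 → ℤˣ) i : ℤ) : ℚ) = 1 := by
    norm_num [Fin.sum_univ_succ]
  have hσn1 : ∑ i, (((![1, -1, -1] : Fin 3 → ℤˣ) i : ℤ) : ℚ) = -1 := by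
    norm_num [Fin.sum_univ_succ]
  have hσn3 : ∑ i, (((![-1, -1, -1] : Fin 3 → ℤˣ) i : ℤ) : ℚ) = -3 := by
    norm_num [Fin.sum_univ_succ]
  rw [hsum]
  constructor
  · rw [eq_inv_of_sq_mul_eq_one_of_sq_eq h2 (hS _).1 (hS _).2 (t := 1 - X) (by simp)
        (by rw [hσ3]; norm_num [map_ofNat]; ring),
      eq_inv_of_sq_mul_eq_one_of_sq_eq h2 (hS _).1 (hS _).2 hA1 (by rw [hσ1, hA]; norm_num),
      eq_inv_of_sq_mul_eq_one_of_sq_eq h2 (hS _).1 (hS _).2 hB1 (by rw [hσn1, hB]; norm_num),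
      eq_inv_of_sq_mul_eq_one_of_sq_eq h2 (hS _).1 (hS _).2 (t := 1 + X) (by simp)
        (by rw [hσn3]; norm_num [map_ofNat]; ring)]
    have h14 : (C (1 / 4) : ℚ⟦X⟧) = 2 * C (1 / 8) := by rw [← map_ofNat C 2, ← map_mul]; norm_num
    have h38 : (C (3 / 8) : ℚ⟦X⟧) = 3 * C (1 / 8) := by rw [← map_ofNat C 3, ← map_mul]; norm_num
    linear_combination C (1 / 8) * inv_one_sub_X_sub_inv_one_add_X (k := ℚ) -
      X * (1 - X ^ 2)⁻¹ * h14 + (A⁻¹ - B⁻¹) * h38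
  · have hcoeff ε : coeff 3 (S ε) =
        (5 * ((∑ i, ((ε i : ℤ) : ℚ)) / 3) ^ 3 - 3 * ((∑ i, ((ε i : ℤ) : ℚ)) / 3)) / 2 :=
      coeff_three_of_sq_mul_eq_one h2 (hS ε).1 (by convert (hS ε).2 using 6; ring)
    simp only [coeff_C_mul, map_sub, map_add, map_nsmul, hcoeff, hσ3, hσ1, hσn1, hσn3]
    norm_num
end

section
/- Every coefficient of the formal power series G_0(w) = 1/(4(1−w^2)) + 3/(8√(1−(2/3)w+w^2)) + 3/(8√(1+(2/3)w+w^2)) is a rational number whose denominator is a power of 3. -/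
/-!
Over any commutative ring, `√(1 + 8U) = 1 + 4U·c(-2U)` where `c = 1 + x c²` is the Catalan
series, so `√(1 + 8U) ≡ 1 + 4U` and `(√(1 + 8U))⁻¹ ≡ 1 - 4U` modulo 8. Since
`1 - 2tw + w² = (1 - tw)² (1 + 8t²w² (1 - tw)⁻²)` when `9t² = 1`, taking `t = ±1/3` gives, in
`ℤ[1/3]⟦w⟧`, `A⁻¹ ≡ p - 4t²w²p³` and `B⁻¹ ≡ q - 4t²w²q³` modulo 8, where `p = (1 - w/3)⁻¹` and
`q = (1 + w/3)⁻¹`. Then `8G₀ = 2(1 - w²)⁻¹ + 3A⁻¹ + 3B⁻¹` is divisible by 8 in `ℤ[1/3]⟦w⟧`,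
because `p + q = 2pq` and `(1 - w²)⁻¹ ≡ pq` modulo 8.
-/

open PowerSeries

namespace PowerSeries

variable {R : Type*} [CommRing R]

theorem exists_mul_eq_one_of_constantCoeff_eq_one {f : R⟦X⟧} (hf : constantCoeff f = 1) :
    ∃ g, f * g = 1 :=
  (isUnit_iff_constantCoeff.2 (hf ▸ isUnit_one)).exists_right_inv

theorem exists_sq_mul_add_one_eq (y : R⟦X⟧) (hy : constantCoeff y = 0) :
    ∃ c : R⟦X⟧, c ^ 2 * y + 1 = c := by
  have hs : HasSubst y := HasSubst.of_constantCoeff_zero' hy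
  refine ⟨substAlgHom hs (catalanSeries.map (Nat.castRingHom R)), ?_⟩
  have := congrArg (fun f ↦ substAlgHom hs (f.map (Nat.castRingHom R)))
    catalanSeries_sq_mul_X_add_one
  simpa only [map_add, map_mul, map_pow, map_one, map_X, substAlgHom_X] using this

theorem exists_sqrt_one_add_eight_mul (U : R⟦X⟧) (hU : constantCoeff U = 0) :
    ∃ E q : R⟦X⟧, E ^ 2 = 1 + 8 * U ∧ constantCoeff E = 1 ∧ E * q = 1 ∧
      8 ∣ q - (1 - 4 * U) := by
  obtain ⟨c, hc⟩ := exists_sq_mul_add_one_eq (-2 * U) (by simp [hU])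
  have hE : constantCoeff (1 + 4 * U * c) = 1 := by simp [hU]
  obtain ⟨q, hq⟩ := exists_mul_eq_one_of_constantCoeff_eq_one hE
  refine ⟨_, q, by linear_combination (-8 * U) * hc, hE, hq,
    U ^ 2 * c ^ 2 * (1 + 2 * q), ?_⟩
  linear_combination (1 - 4 * U * c) * hq + 4 * U * hc

theorem exists_sqrt_one_sub_two_mul_X_add_X_sq (c u p : R⟦X⟧) (hcu : c ^ 2 + 8 * u = 1)
    (hp : (1 - c * X) * p = 1) :
    ∃ s q : R⟦X⟧, s ^ 2 = 1 - 2 * c * X + X ^ 2 ∧ constantCoeff s = 1 ∧ s * q = 1 ∧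
      8 ∣ q - (p - 4 * u * X ^ 2 * p ^ 3) := by
  obtain ⟨E, q, hE2, hE1, hEq, ⟨w, hw⟩⟩ :=
    exists_sqrt_one_add_eight_mul (u * X ^ 2 * p ^ 2) (by simp)
  refine ⟨(1 - c * X) * E, p * q, ?_, by simp [hE1], ?_, p * w, ?_⟩
  · linear_combination (1 - c * X) ^ 2 * hE2 + 8 * u * X ^ 2 * ((1 - c * X) * p + 1) * hp +
      X ^ 2 * hcu
  · linear_combination E * q * hp + hEq
  · linear_combination p * hw

theorem constantCoeff_map {S : Type*} [CommRing S] (f : R →+* S) (φ : R⟦X⟧) :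
    constantCoeff (map f φ) = f (constantCoeff φ) := by
  rw [← coeff_zero_eq_constantCoeff_apply, coeff_map, coeff_zero_eq_constantCoeff_apply]

theorem eq_of_sq_eq_sq_of_constantCoeff_eq_one_s11 [NoZeroDivisors R] [NeZero (2 : R)]
    {f g : R⟦X⟧} (h : f ^ 2 = g ^ 2) (hf : constantCoeff f = 1) (hg : constantCoeff g = 1) :
    f = g := by
  refine (sq_eq_sq_iff_eq_or_eq_neg.1 h).resolve_right fun hfg ↦ ?_
  have := congrArg constantCoeff hfg
  rw [map_neg, hf, hg] at this
  exact NeZero.ne (2 : R) (by linear_combination this)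

theorem inv_eq_of_mul_eq_one {k : Type*} [Field k] {f g : k⟦X⟧} (h : f * g = 1) : f⁻¹ = g := by
  refine (inv_eq_iff_mul_eq_one fun h0 ↦ ?_).2 (by rw [mul_comm, h])
  simpa [h0] using congrArg constantCoeff h

theorem exists_inv_eq_map_of_sq_eq {k : Type*} [Field k] [NeZero (2 : k)] (φ : R →+* k)
    {c u p : R⟦X⟧} (hcu : c ^ 2 + 8 * u = 1) (hp : (1 - c * X) * p = 1) {A : k⟦X⟧}
    (hA1 : constantCoeff A = 1) (hA : A ^ 2 = map φ (1 - 2 * c * X + X ^ 2)) :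
    ∃ a, A⁻¹ = map φ a ∧ 8 ∣ a - (p - 4 * u * X ^ 2 * p ^ 3) := by
  obtain ⟨s, a, hs, hs1, hsa, ha⟩ := exists_sqrt_one_sub_two_mul_X_add_X_sq c u p hcu hp
  have hsA : map φ s = A := eq_of_sq_eq_sq_of_constantCoeff_eq_one_s11
    (by rw [← map_pow, hs, hA]) (by simp [constantCoeff_map, hs1]) hA1
  exact ⟨a, inv_eq_of_mul_eq_one (by rw [← hsA, ← map_mul, hsa, map_one]), ha⟩

theorem C_quarter_mul_add_C_three_eighths_mul_add_C_three_eighths_mul_eq {k : Type*} [Field k]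
    [CharZero k] {y a b g : k⟦X⟧} (h : 2 * y + 3 * a + 3 * b = 8 * g) :
    C (1 / 4 : k) * y + C (3 / 8 : k) * a + C (3 / 8 : k) * b = g := by
  have h14 : (8 : k⟦X⟧) * C (1 / 4) = 2 := by rw [← map_ofNat C, ← map_mul, ← map_ofNat C]; norm_num
  have h38 : (8 : k⟦X⟧) * C (3 / 8) = 3 := by rw [← map_ofNat C, ← map_mul, ← map_ofNat C]; norm_num
  refine mul_left_cancel₀ (show (8 : k⟦X⟧) ≠ 0 by rw [← map_ofNat C]; simp) ?_
  linear_combination h + y * h14 + (a + b) * h38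

end PowerSeries

theorem eight_dvd_two_mul_add_three_mul_add_three_mul {R : Type*} [CommRing R]
    {t x y p q a b : R} (ht : 3 * t = 1) (hp : (1 - t * x) * p = 1)
    (hq : (1 - -t * x) * q = 1) (hy : (1 - x ^ 2) * y = 1)
    (ha : 8 ∣ a - (p - 4 * t ^ 2 * x ^ 2 * p ^ 3)) (hb : 8 ∣ b - (q - 4 * t ^ 2 * x ^ 2 * q ^ 3)) :
    8 ∣ 2 * y + 3 * a + 3 * b := by
  obtain ⟨α, hα⟩ := ha
  obtain ⟨β, hβ⟩ := hb
  have hpq : p + q = 2 * p * q := by linear_combination (-q) * hp + (-p) * hq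
  have hy' : y - p * q = 8 * t ^ 2 * x ^ 2 * y * p * q := by
    linear_combination (-y * (1 + t * x) * q) * hp + (-y) * hq + p * q * hy +
      (-y * p * q * x ^ 2 * (1 + 3 * t)) * ht
  refine ⟨p * q + 2 * t ^ 2 * x ^ 2 * y * p * q -
    3 * t ^ 2 * x ^ 2 * p * q * (p ^ 2 - p * q + q ^ 2) + 3 * α + 3 * β, ?_⟩
  linear_combination 2 * hy' + 3 * hα + 3 * hβ +
    (3 - 12 * t ^ 2 * x ^ 2 * (p ^ 2 - p * q + q ^ 2)) * hpq

def intAdjoinInvThree : Subring ℚ where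
  carrier := {x | ∃ (a : ℤ) (k : ℕ), x = a / 3 ^ k}
  zero_mem' := ⟨0, 0, by norm_num⟩
  one_mem' := ⟨1, 0, by norm_num⟩
  add_mem' := by
    rintro _ _ ⟨a, k, rfl⟩ ⟨b, l, rfl⟩
    exact ⟨a * 3 ^ l + b * 3 ^ k, k + l, by push_cast; field_simp; ring⟩
  mul_mem' := by
    rintro _ _ ⟨a, k, rfl⟩ ⟨b, l, rfl⟩
    exact ⟨a * b, k + l, by push_cast; field_simp; ring⟩
  neg_mem' := by
    rintro _ ⟨a, k, rfl⟩
    exact ⟨-a, k, by push_cast; ring⟩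

namespace intAdjoinInvThree

def third : intAdjoinInvThree := ⟨1 / 3, 1, 1, by norm_num⟩

theorem three_mul_third : 3 * third = 1 := by
  ext; simp [third, show ((3 : intAdjoinInvThree) : ℚ) = 3 by norm_cast]

end intAdjoinInvThree

/-- Every coefficient of `G₀(w) = 1/(4(1-w²)) + 3/(8√(1-(2/3)w+w²)) + 3/(8√(1+(2/3)w+w²))`
lies in `ℤ[1/3]`, i.e. is of the form `a/3^k` with `a ∈ ℤ`, `k ∈ ℕ`. -/
theorem G0_coeffs_in_Z_one_third
    (A B : PowerSeries ℚ)
    (hA1 : constantCoeff A = 1) (hA : A ^ 2 = 1 - C (2 / 3 : ℚ) * X + X ^ 2)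
    (hB1 : constantCoeff B = 1) (hB : B ^ 2 = 1 + C (2 / 3 : ℚ) * X + X ^ 2) :
    ∀ n : ℕ, ∃ (a : ℤ) (k : ℕ),
      coeff n (C (1 / 4 : ℚ) * (1 - X ^ 2)⁻¹ + C (3 / 8 : ℚ) * A⁻¹ + C (3 / 8 : ℚ) * B⁻¹) =
        (a : ℚ) / 3 ^ k := by
  set S := intAdjoinInvThree
  set t : S⟦X⟧ := C intAdjoinInvThree.third with ht_def
  have ht : 3 * t = 1 := by
    rw [ht_def, ← map_ofNat C, ← map_mul, intAdjoinInvThree.three_mul_third, map_one]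
  have h23 : C (2 / 3 : ℚ) = 2 * map S.subtype t := by
    rw [ht_def, map_C, ← map_ofNat C, ← map_mul]; norm_num [intAdjoinInvThree.third]
  obtain ⟨p, hp⟩ := exists_mul_eq_one_of_constantCoeff_eq_one (f := 1 - t * X) (by simp)
  obtain ⟨q, hq⟩ := exists_mul_eq_one_of_constantCoeff_eq_one (f := 1 - -t * X) (by simp)
  obtain ⟨y, hy⟩ := exists_mul_eq_one_of_constantCoeff_eq_one (f := (1 - X ^ 2 : S⟦X⟧)) (by simp)
  obtain ⟨a, hAa, ha⟩ := exists_inv_eq_map_of_sq_eq S.subtype (u := t ^ 2)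
    (by linear_combination (3 * t + 1) * ht) hp hA1 (by simp [hA, h23, map_ofNat])
  obtain ⟨b, hBb, hb⟩ := exists_inv_eq_map_of_sq_eq S.subtype (u := t ^ 2)
    (by linear_combination (3 * t + 1) * ht) hq hB1 (by simp [hB, h23, map_ofNat])
  have hYy : (1 - X ^ 2 : ℚ⟦X⟧)⁻¹ = map S.subtype y :=
    inv_eq_of_mul_eq_one (by simpa using congrArg (map S.subtype) hy)
  obtain ⟨g, hg⟩ := eight_dvd_two_mul_add_three_mul_add_three_mul ht hp hq hy ha hb
  have hG := C_quarter_mul_add_C_three_eighths_mul_add_C_three_eighths_mul_eq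
    (by simpa only [map_add, map_mul, map_ofNat] using congrArg (map S.subtype) hg)
  rw [← hYy, ← hAa, ← hBb] at hG
  intro n
  rw [hG, coeff_map]
  exact (coeff n g).2
end

section
/- Let F(w_1,w_2,w_3) = H((w_1−w_2)/(1−w_2), w_3(1−w_2)/(1−w_3)) / ((1−w_2)(1−w_3)) for some formal power series H(x,y) ∈ ℂ[[x,y]]. Then F satisfies the differential equation (1−w_1)∂F/∂w_1 + (1−w_2)∂F/∂w_2 + w_3(1−w_3)∂F/∂w_3 = (1+w_3)F. -/
/-!
The operator `D = (1-w₁)∂₁ + (1-w₂)∂₂ + w₃(1-w₃)∂₃` is a derivation, and it annihilates both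
`x = (w₁-w₂)/(1-w₂)` and `y = w₃(1-w₂)/(1-w₃)`; hence it annihilates every polynomial in `x, y`.
Since `D` lowers the total degree by at most one and, up to any given degree, `H(x, y)` agrees with
a polynomial in `x, y`, also `D (H(x, y)) = 0`. Finally
`D ((1-w₂)(1-w₃)) = -(1+w₃)(1-w₂)(1-w₃)`, so `D` acts on the prefactor `1/((1-w₂)(1-w₃))` as
multiplication by `1+w₃`, and the Leibniz rule gives `DF = (1+w₃)F`.
-/

open MvPowerSeries

/-- Formal partial derivative of a power series in three variables. -/
noncomputable def pderiv3 (i : Fin 3) (F : MvPowerSeries (Fin 3) ℂ) :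
    MvPowerSeries (Fin 3) ℂ :=
  fun m => ((m i : ℂ) + 1) * coeff (m + Finsupp.single i 1) F

/-- Composition `H(f,g)` of a two-variable power series `H` with two three-variable power
series `f`, `g` (intended for `f`, `g` with zero constant term, in which case the coefficient
of a monomial `m` only receives contributions from `f^i g^j` with `i + j ≤ deg m`). -/
noncomputable def comp2 (H : MvPowerSeries (Fin 2) ℂ) (f g : MvPowerSeries (Fin 3) ℂ) :
    MvPowerSeries (Fin 3) ℂ :=
  fun m =>
    ∑ p ∈ Finset.range (m.sum (fun _ e => e) + 1) ×ˢ
        Finset.range (m.sum (fun _ e => e) + 1),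
      coeff (Finsupp.single 0 p.1 + Finsupp.single 1 p.2) H *
        coeff m (f ^ p.1 * g ^ p.2)

/-- The power series `(w₁ - w₂)/(1 - w₂)`. -/
noncomputable def subx : MvPowerSeries (Fin 3) ℂ := (X 0 - X 1) * (1 - X 1)⁻¹

/-- The power series `w₃(1 - w₂)/(1 - w₃)`. -/
noncomputable def suby : MvPowerSeries (Fin 3) ℂ := X 2 * (1 - X 1) * (1 - X 2)⁻¹

/-- `F(w₁,w₂,w₃) = H((w₁-w₂)/(1-w₂), w₃(1-w₂)/(1-w₃)) / ((1-w₂)(1-w₃))`. -/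
noncomputable def FofH (H : MvPowerSeries (Fin 2) ℂ) : MvPowerSeries (Fin 3) ℂ :=
  ((1 - X 1) * (1 - X 2))⁻¹ * comp2 H subx suby

namespace MvPowerSeries

variable {σ R : Type*} [CommSemiring R]

theorem le_order_pderiv {f : MvPowerSeries σ R} {n : ℕ} (i : σ) (h : n + 1 ≤ f.order) :
    n ≤ (pderiv R i f).order := by
  refine le_order fun d hd => ?_
  have hlt : ((d + Finsupp.single i 1).degree : ℕ∞) < f.order := by
    have hd' : d.degree < n := by exact_mod_cast hd
    calc ((d + Finsupp.single i 1).degree : ℕ∞) = (d.degree + 1 : ℕ) := by simp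
      _ < n + 1 := by exact_mod_cast Nat.succ_lt_succ hd'
      _ ≤ f.order := h
  rw [coeff_pderiv, coeff_of_lt_order hlt, zero_mul]

theorem coeff_pow_mul_eq_zero_of_degree_lt {f : MvPowerSeries σ R} (hf : constantCoeff f = 0)
    (g : MvPowerSeries σ R) {d : σ →₀ ℕ} {n : ℕ} (hd : d.degree < n) :
    coeff d (f ^ n * g) = 0 :=
  coeff_of_lt_order <| (Nat.cast_lt.mpr hd).trans_le <|
    (le_order_pow_of_constantCoeff_eq_zero n hf).trans (le_self_add.trans le_order_mul)

end MvPowerSeries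

theorem Derivation.map_inv_of_map_eq_mul {σ K : Type*} [Field K]
    (D : Derivation K (MvPowerSeries σ K) (MvPowerSeries σ K)) {u c : MvPowerSeries σ K}
    (hu : constantCoeff u ≠ 0) (h : D u = c * u) : D u⁻¹ = -c * u⁻¹ := by
  have hinv : u⁻¹ * u = 1 := MvPowerSeries.inv_mul_cancel u hu
  rw [D.leibniz_of_mul_eq_one hinv, h, smul_eq_mul]
  linear_combination (-c * u⁻¹) * hinv

theorem pderiv3_eq_pderiv (i : Fin 3) (F : MvPowerSeries (Fin 3) ℂ) :
    pderiv3 i F = pderiv ℂ i F := by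
  ext m
  rw [coeff_pderiv, mul_comm]
  rfl

noncomputable def pdeDerivation :
    Derivation ℂ (MvPowerSeries (Fin 3) ℂ) (MvPowerSeries (Fin 3) ℂ) :=
  (1 - X 0 : MvPowerSeries (Fin 3) ℂ) • pderiv ℂ 0 +
    (1 - X 1 : MvPowerSeries (Fin 3) ℂ) • pderiv ℂ 1 +
    (X 2 * (1 - X 2) : MvPowerSeries (Fin 3) ℂ) • pderiv ℂ 2

theorem pdeDerivation_apply (u : MvPowerSeries (Fin 3) ℂ) :
    pdeDerivation u = (1 - X 0) * pderiv ℂ 0 u + (1 - X 1) * pderiv ℂ 1 u +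
      X 2 * (1 - X 2) * pderiv ℂ 2 u :=
  rfl

@[simp]
theorem pdeDerivation_X_zero : pdeDerivation (X 0) = 1 - X 0 := by
  simp [pdeDerivation_apply]

@[simp]
theorem pdeDerivation_X_one : pdeDerivation (X 1) = 1 - X 1 := by
  simp [pdeDerivation_apply]

@[simp]
theorem pdeDerivation_X_two : pdeDerivation (X 2) = X 2 * (1 - X 2) := by
  simp [pdeDerivation_apply]

theorem le_order_pdeDerivation {u : MvPowerSeries (Fin 3) ℂ} {n : ℕ} (h : n + 1 ≤ u.order) :
    n ≤ (pdeDerivation u).order := by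
  have hterm (c : MvPowerSeries (Fin 3) ℂ) (i : Fin 3) : (n : ℕ∞) ≤ (c * pderiv ℂ i u).order :=
    (le_order_pderiv i h).trans (le_add_self.trans le_order_mul)
  rw [pdeDerivation_apply]
  exact le_min ((le_min (hterm _ 0) (hterm _ 1)).trans min_order_le_add) (hterm _ 2)
    |>.trans min_order_le_add

theorem pdeDerivation_one_sub_X_one : pdeDerivation (1 - X 1) = -1 * (1 - X 1) := by
  simp

theorem pdeDerivation_one_sub_X_two : pdeDerivation (1 - X 2) = -X 2 * (1 - X 2) := by
  simp

theorem pdeDerivation_subx : pdeDerivation subx = 0 := by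
  rw [subx, Derivation.leibniz,
    pdeDerivation.map_inv_of_map_eq_mul (by simp) pdeDerivation_one_sub_X_one, map_sub,
    pdeDerivation_X_zero, pdeDerivation_X_one, smul_eq_mul, smul_eq_mul]
  ring

theorem pdeDerivation_suby : pdeDerivation suby = 0 := by
  rw [suby, Derivation.leibniz,
    pdeDerivation.map_inv_of_map_eq_mul (by simp) pdeDerivation_one_sub_X_two,
    Derivation.leibniz, pdeDerivation_X_two, pdeDerivation_one_sub_X_one]
  simp only [smul_eq_mul]
  ring

theorem pdeDerivation_inv_one_sub_mul_one_sub :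
    pdeDerivation ((1 - X 1) * (1 - X 2))⁻¹ = (1 + X 2) * ((1 - X 1) * (1 - X 2))⁻¹ := by
  have h : pdeDerivation ((1 - X 1) * (1 - X 2)) = -(1 + X 2) * ((1 - X 1) * (1 - X 2)) := by
    rw [Derivation.leibniz, pdeDerivation_one_sub_X_one, pdeDerivation_one_sub_X_two, smul_eq_mul,
      smul_eq_mul]
    ring
  rw [pdeDerivation.map_inv_of_map_eq_mul (by simp) h, neg_neg]

noncomputable def comp2Trunc (H : MvPowerSeries (Fin 2) ℂ) (f g : MvPowerSeries (Fin 3) ℂ)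
    (N : ℕ) : MvPowerSeries (Fin 3) ℂ :=
  ∑ p ∈ Finset.range (N + 1) ×ˢ Finset.range (N + 1),
    C (coeff (Finsupp.single 0 p.1 + Finsupp.single 1 p.2) H) * (f ^ p.1 * g ^ p.2)

theorem Derivation.map_comp2Trunc_eq_zero
    (D : Derivation ℂ (MvPowerSeries (Fin 3) ℂ) (MvPowerSeries (Fin 3) ℂ))
    (H : MvPowerSeries (Fin 2) ℂ) {f g : MvPowerSeries (Fin 3) ℂ} (hf : D f = 0) (hg : D g = 0)
    (N : ℕ) : D (comp2Trunc H f g N) = 0 := by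
  refine (map_sum D _ _).trans (Finset.sum_eq_zero fun p _ => ?_)
  rw [c_eq_algebraMap, D.leibniz, D.leibniz, D.leibniz_pow, D.leibniz_pow, hf, hg,
    D.map_algebraMap]
  simp

theorem coeff_comp2 (H : MvPowerSeries (Fin 2) ℂ) (f g : MvPowerSeries (Fin 3) ℂ)
    (m : Fin 3 →₀ ℕ) :
    coeff m (comp2 H f g) = ∑ p ∈ Finset.range (m.degree + 1) ×ˢ Finset.range (m.degree + 1),
      coeff (Finsupp.single 0 p.1 + Finsupp.single 1 p.2) H * coeff m (f ^ p.1 * g ^ p.2) :=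
  rfl

theorem coeff_comp2_eq_coeff_comp2Trunc (H : MvPowerSeries (Fin 2) ℂ)
    {f g : MvPowerSeries (Fin 3) ℂ} (hf : constantCoeff f = 0) (hg : constantCoeff g = 0)
    {m : Fin 3 →₀ ℕ} {N : ℕ} (hm : m.degree ≤ N) :
    coeff m (comp2 H f g) = coeff m (comp2Trunc H f g N) := by
  rw [coeff_comp2, comp2Trunc, map_sum]
  simp only [coeff_C_mul]
  refine Finset.sum_subset (Finset.product_subset_product ?_ ?_) fun p hp hp' => ?_
  · exact Finset.range_subset_range.mpr (by omega)
  · exact Finset.range_subset_range.mpr (by omega)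
  · simp only [Finset.mem_product, Finset.mem_range] at hp hp'
    rcases Nat.lt_or_ge m.degree p.1 with h | h
    · rw [coeff_pow_mul_eq_zero_of_degree_lt hf _ h, mul_zero]
    · rw [mul_comm (f ^ p.1), coeff_pow_mul_eq_zero_of_degree_lt hg _ (by omega), mul_zero]

theorem pdeDerivation_comp2 (H : MvPowerSeries (Fin 2) ℂ) {f g : MvPowerSeries (Fin 3) ℂ}
    (hf₀ : constantCoeff f = 0) (hg₀ : constantCoeff g = 0)
    (hf : pdeDerivation f = 0) (hg : pdeDerivation g = 0) :
    pdeDerivation (comp2 H f g) = 0 := by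
  ext m
  set N := m.degree + 1
  have hagree : (N + 1 : ℕ∞) ≤ (comp2 H f g - comp2Trunc H f g N).order := by
    refine le_order fun d hd => ?_
    have hd' : d.degree ≤ N := by exact_mod_cast ENat.natCast_lt_add_one_iff.mp hd
    rw [map_sub, coeff_comp2_eq_coeff_comp2Trunc H hf₀ hg₀ hd', sub_self]
  have hm : (m.degree : ℕ∞) < (pdeDerivation (comp2 H f g - comp2Trunc H f g N)).order :=
    (Nat.cast_lt.mpr m.degree.lt_succ_self).trans_le (le_order_pdeDerivation hagree)
  rw [map_sub, pdeDerivation.map_comp2Trunc_eq_zero H hf hg, sub_zero] at hm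
  rw [coeff_of_lt_order hm, map_zero]

/-- Any `F` of the form `H((w₁-w₂)/(1-w₂), w₃(1-w₂)/(1-w₃))/((1-w₂)(1-w₃))` satisfies the
PDE `(1-w₁)F_{w₁} + (1-w₂)F_{w₂} + w₃(1-w₃)F_{w₃} = (1+w₃)F`. -/
theorem FofH_satisfies_pde (H : MvPowerSeries (Fin 2) ℂ) :
    (1 - X 0) * pderiv3 0 (FofH H) + (1 - X 1) * pderiv3 1 (FofH H) +
        X 2 * (1 - X 2) * pderiv3 2 (FofH H) = (1 + X 2) * FofH H := by
  simp only [pderiv3_eq_pderiv]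
  rw [← pdeDerivation_apply, FofH, Derivation.leibniz, pdeDerivation_inv_one_sub_mul_one_sub,
    pdeDerivation_comp2 H (by simp [subx]) (by simp [suby]) pdeDerivation_subx pdeDerivation_suby,
    smul_zero, zero_add, smul_eq_mul]
  ring
end

section
/- Let H(x,y) = ∑_{i,j≥0} h_{ij} x^i y^j ∈ ℂ[[x,y]] and F(w_1,w_2,w_3) = H((w_1−w_2)/(1−w_2), w_3(1−w_2)/(1−w_3))/((1−w_2)(1−w_3)). Define the linear map Φ_F on ℂ[u,v] by Φ_F[C(S,a) u^a v^{S−a}] = ∑_{b=0}^S C(S,b) R_S(a,b) u^b v^{S−b}, where R_S(a,b) is the coefficient of w_1^a w_2^{S−a} w_3^b in F. Then Φ_F[u^n] = ∑_{j=0}^n C(n,j) h_{nj} u^j (u+v)^{n−j} for every n ≥ 0. -/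
/-!
Only monomials free of `w₂` enter `Rmat H n n b`, so we may set `w₂ = 0` by the algebra map
`killCompl` onto the variables `w₁, w₃`. Since the substituted series have no constant term,
`comp2` agrees below any fixed degree with a polynomial in them, and such a polynomial commutes
with that map. Hence `R_n(n,b)` is the coefficient of `w₁ⁿ w₃ᵇ` in `H(w₁, w₃/(1-w₃))/(1-w₃)`,
namely `∑_q h_{nq} [w₃ᵇ] w₃^q/(1-w₃)^{q+1} = ∑_q C(b,q) h_{nq}`. The identity
`C(n,b) C(b,q) = C(n,q) C(n-q,b-q)` then turns `∑_b C(n,b) R_n(n,b) u^b v^{n-b}` into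
`∑_q C(n,q) h_{nq} u^q (u+v)^{n-q}`.
-/

open MvPowerSeries

/-- The matrix entry `R_S(a,b) = [w₁^a w₂^{S-a} w₃^b] F`. -/
noncomputable def Rmat (H : MvPowerSeries (Fin 2) ℂ) (S a b : ℕ) : ℂ :=
  coeff (Finsupp.single 0 a + Finsupp.single 1 (S - a) + Finsupp.single 2 b) (FofH H)

/-- The coefficient `h_{ij}` of `H`. -/
noncomputable def hcoeff (H : MvPowerSeries (Fin 2) ℂ) (i j : ℕ) : ℂ :=
  coeff (Finsupp.single 0 i + Finsupp.single 1 j) H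

open Finset

theorem Finset.sum_range_choose_mul_of_le {R : Type*} [Semiring R] (f : ℕ → R) {b M : ℕ}
    (hb : b ≤ M) :
    ∑ q ∈ range (M + 1), (b.choose q : R) * f q = ∑ q ∈ range (b + 1), (b.choose q : R) * f q :=
  (sum_subset (range_subset_range.2 (by omega)) fun q _ hq => by
    rw [Nat.choose_eq_zero_of_lt (by simpa using hq), Nat.cast_zero, zero_mul]).symm

theorem Finset.sum_choose_mul_choose_mul_pow_mul_pow {R : Type*} [CommSemiring R] (u v : R)
    (n q : ℕ) :
    ∑ b ∈ range (n + 1), ((n.choose b * b.choose q : ℕ) : R) * u ^ b * v ^ (n - b) =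
      n.choose q * u ^ q * (u + v) ^ (n - q) := by
  rcases le_or_gt q n with hq | hq
  · obtain ⟨k, rfl⟩ := Nat.exists_eq_add_of_le hq
    rw [add_pow, Nat.add_sub_cancel_left, mul_sum, add_assoc, sum_range_add,
      sum_eq_zero fun b hb => by rw [Nat.choose_eq_zero_of_lt (mem_range.1 hb), mul_zero,
        Nat.cast_zero, zero_mul, zero_mul], zero_add]
    refine sum_congr rfl fun i _ => ?_
    have hchoose : (q + k).choose (q + i) * (q + i).choose q = (q + k).choose q * k.choose i := by
      rw [Nat.choose_mul (by omega), Nat.add_sub_cancel_left, Nat.add_sub_cancel_left]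
    rw [hchoose, show q + k - (q + i) = k - i by omega]
    push_cast
    ring
  · rw [Nat.choose_eq_zero_of_lt hq, Nat.cast_zero, zero_mul, zero_mul]
    exact sum_eq_zero fun b hb => by
      rw [Nat.choose_eq_zero_of_lt (n := b) (by simp at hb; omega), mul_zero, Nat.cast_zero,
        zero_mul, zero_mul]

namespace PowerSeries

theorem coeff_mk_one_mul_X_mul_mk_one_pow {R : Type*} [CommRing R] (q b : ℕ) :
    PowerSeries.coeff b (mk 1 * (X * mk 1) ^ q : R⟦X⟧) = b.choose q := by
  rw [show (mk 1 * (X * mk 1) ^ q : R⟦X⟧) = X ^ q * mk 1 ^ (q + 1) by ring,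
    mk_one_pow_eq_mk_choose_add, coeff_X_pow_mul', coeff_mk]
  split_ifs with h
  · rw [Nat.add_sub_cancel' h]
  · rw [Nat.choose_eq_zero_of_lt (not_le.1 h), Nat.cast_zero]

end PowerSeries

namespace MvPowerSeries

variable {σ τ : Type*}

theorem coeff_pow_mul_pow_eq_zero_of_degree_lt {R : Type*} [CommSemiring R]
    {f g : MvPowerSeries σ R} (hf : constantCoeff f = 0) (hg : constantCoeff g = 0) {p q : ℕ}
    {x : σ →₀ ℕ} (hx : x.degree < p + q) : coeff x (f ^ p * g ^ q) = 0 := by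
  apply coeff_of_lt_order
  calc (x.degree : ℕ∞) < p + q := by exact_mod_cast hx
    _ ≤ (f ^ p).order + (g ^ q).order := add_le_add
        (le_order_pow_of_constantCoeff_eq_zero p hf) (le_order_pow_of_constantCoeff_eq_zero q hg)
    _ ≤ (f ^ p * g ^ q).order := le_order_mul

theorem rename_punit_X {R : Type*} [CommSemiring R] (j : σ) :
    rename (Function.Embedding.punit j) (PowerSeries.X : PowerSeries R) = X j :=
  rename_X (Function.Embedding.punit j) ()

section Field

variable {k : Type*} [Field k]

theorem constantCoeff_killCompl (e : σ ↪ τ) (A : MvPowerSeries τ k) :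
    constantCoeff (killCompl e A) = constantCoeff A := by
  rw [← coeff_zero_eq_constantCoeff_apply, coeff_killCompl, Finsupp.embDomain_zero,
    coeff_zero_eq_constantCoeff_apply]

theorem killCompl_inv (e : σ ↪ τ) (A : MvPowerSeries τ k) :
    killCompl e A⁻¹ = (killCompl e A)⁻¹ := by
  by_cases hA : constantCoeff A = 0
  · rw [inv_eq_zero.2 hA, inv_eq_zero.2 (by rwa [constantCoeff_killCompl]), map_zero]
  · rw [MvPowerSeries.eq_inv_iff_mul_eq_one (by rwa [constantCoeff_killCompl]), ← map_mul,
      MvPowerSeries.inv_mul_cancel _ hA, map_one]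

theorem inv_one_sub_X_eq_rename_mk_one (j : σ) :
    (1 - X j : MvPowerSeries σ k)⁻¹ = rename (Function.Embedding.punit j) (PowerSeries.mk 1) := by
  rw [MvPowerSeries.inv_eq_iff_mul_eq_one (by simp), ← rename_punit_X,
    ← map_one (rename (Function.Embedding.punit j)), ← map_sub, ← map_mul,
    PowerSeries.mk_one_mul_one_sub_eq_one, map_one]

end Field

theorem coeff_X_pow_mul_rename_punit {R : Type*} [CommSemiring R] {i j : σ} (hij : i ≠ j)
    (t : PowerSeries R) (p n b : ℕ) :
    coeff (Finsupp.single i n + Finsupp.single j b)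
        (X i ^ p * rename (Function.Embedding.punit j) t) =
      if p = n then PowerSeries.coeff b t else 0 := by
  classical
  rw [X_pow_eq, coeff_monomial_mul, one_mul]
  by_cases hpn : p ≤ n
  · rw [if_pos (le_add_right (Finsupp.single_le_single.2 hpn))]
    obtain ⟨k, rfl⟩ := Nat.exists_eq_add_of_le hpn
    rw [Finsupp.single_add, add_assoc, add_tsub_cancel_left]
    rcases Nat.eq_zero_or_pos k with rfl | hk
    · have hb : Finsupp.single j b =
          Finsupp.embDomain (Function.Embedding.punit j) (Finsupp.single () b) := by
        rw [Finsupp.embDomain_single]; rfl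
      rw [Finsupp.single_zero, zero_add, if_pos (add_zero p).symm, hb, coeff_embDomain_rename]
      rfl
    · rw [if_neg (by omega)]
      refine coeff_rename_eq_zero _ _ fun ⟨x, hx⟩ => ?_
      have hxi := DFunLike.congr_fun hx i
      rw [Finsupp.add_apply, Finsupp.single_eq_same, Finsupp.single_eq_of_ne hij, add_zero,
        Finsupp.mapDomain_of_notMem_range _ _ (by rintro ⟨_, h⟩; exact hij h.symm)] at hxi
      omega
  · rw [if_neg, if_neg (by omega)]
    intro hle
    have hi := hle i
    simp only [Finsupp.coe_add, Pi.add_apply, Finsupp.single_eq_same,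
      Finsupp.single_eq_of_ne hij, add_zero] at hi
    omega

noncomputable def comp2Trunc (H : MvPowerSeries (Fin 2) ℂ) (N : ℕ) (f g : MvPowerSeries σ ℂ) :
    MvPowerSeries σ ℂ :=
  ∑ pq ∈ range (N + 1) ×ˢ range (N + 1),
    coeff (Finsupp.single 0 pq.1 + Finsupp.single 1 pq.2) H • (f ^ pq.1 * g ^ pq.2)

theorem map_comp2Trunc (φ : MvPowerSeries σ ℂ →ₐ[ℂ] MvPowerSeries τ ℂ)
    (H : MvPowerSeries (Fin 2) ℂ) (N : ℕ) (f g : MvPowerSeries σ ℂ) :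
    φ (comp2Trunc H N f g) = comp2Trunc H N (φ f) (φ g) := by
  simp only [comp2Trunc, map_sum, map_smul, map_mul, map_pow]

theorem coeff_comp2_eq_coeff_comp2Trunc {H : MvPowerSeries (Fin 2) ℂ}
    {f g : MvPowerSeries (Fin 3) ℂ} (hf : constantCoeff f = 0) (hg : constantCoeff g = 0)
    {N : ℕ} {x : Fin 3 →₀ ℕ} (hx : x.degree ≤ N) :
    coeff x (comp2 H f g) = coeff x (comp2Trunc H N f g) := by
  change ∑ pq ∈ range (x.degree + 1) ×ˢ range (x.degree + 1), _ = _
  simp only [comp2Trunc, map_sum, coeff_smul]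
  refine sum_subset (product_subset_product (range_subset_range.2 (by omega))
    (range_subset_range.2 (by omega))) fun pq _ hpq => ?_
  simp only [mem_product, mem_range, not_and_or, not_lt] at hpq
  rw [coeff_pow_mul_pow_eq_zero_of_degree_lt hf hg (by omega), mul_zero]

theorem coeff_mul_comp2_eq_coeff_mul_comp2Trunc (A : MvPowerSeries (Fin 3) ℂ)
    {H : MvPowerSeries (Fin 2) ℂ} {f g : MvPowerSeries (Fin 3) ℂ} (hf : constantCoeff f = 0)
    (hg : constantCoeff g = 0) {N : ℕ} {x : Fin 3 →₀ ℕ} (hx : x.degree ≤ N) :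
    coeff x (A * comp2 H f g) = coeff x (A * comp2Trunc H N f g) := by
  simp only [coeff_mul]
  refine sum_congr rfl fun pq hpq => ?_
  rw [coeff_comp2_eq_coeff_comp2Trunc hf hg]
  rw [← mem_antidiagonal.1 hpq, map_add] at hx
  omega

theorem coeff_rename_mul_comp2Trunc_X_rename (H : MvPowerSeries (Fin 2) ℂ) {N n : ℕ}
    (hn : n ≤ N) (b : ℕ) (s t : PowerSeries ℂ) :
    coeff (Finsupp.single 0 n + Finsupp.single 1 b)
        (rename (Function.Embedding.punit (1 : Fin 2)) s *
          comp2Trunc H N (X 0) (rename (Function.Embedding.punit 1) t)) =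
      ∑ q ∈ range (N + 1), hcoeff H n q * PowerSeries.coeff b (s * t ^ q) := by
  have hsplit (p q : ℕ) : rename (Function.Embedding.punit (1 : Fin 2)) s *
      (X 0 ^ p * rename (Function.Embedding.punit 1) t ^ q) =
        X 0 ^ p * rename (Function.Embedding.punit 1) (s * t ^ q) := by
    rw [map_mul, map_pow]; ring
  simp only [comp2Trunc, mul_sum, mul_smul_comm, hsplit, map_sum, coeff_smul,
    coeff_X_pow_mul_rename_punit (show (0 : Fin 2) ≠ 1 by decide), sum_product, mul_ite,
    mul_zero, sum_ite_irrel, sum_const_zero]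
  rw [sum_ite_eq', if_pos (mem_range.2 (Nat.lt_succ_of_le hn))]
  rfl

end MvPowerSeries

open MvPowerSeries

theorem constantCoeff_subx : constantCoeff subx = 0 := by
  simp [subx]

theorem constantCoeff_suby : constantCoeff suby = 0 := by
  simp [suby]

section KillW2

-- `κ` sets `w₂ = 0` and renames `w₁, w₃` to the variables `0, 1` of `Fin 2`.
local notation "κ" => killCompl (R := ℂ) (Fin.succAboveEmb (1 : Fin 3))

theorem killCompl_X_zero : κ (X 0) = X 0 := killCompl_X 0

theorem killCompl_X_one : κ (X 1) = 0 := killCompl_X_eq_zero (by simp)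

theorem killCompl_X_two : κ (X 2) = X 1 := killCompl_X 1

theorem killCompl_subx : κ subx = X 0 := by
  simp [subx, killCompl_inv, killCompl_X_zero, killCompl_X_one]

theorem killCompl_suby :
    κ suby = rename (Function.Embedding.punit 1) (PowerSeries.X * PowerSeries.mk 1) := by
  rw [suby, map_mul, map_mul, killCompl_inv, map_sub, map_sub, map_one, killCompl_X_one,
    killCompl_X_two, sub_zero, mul_one, inv_one_sub_X_eq_rename_mk_one, ← rename_punit_X,
    ← map_mul]

theorem killCompl_inv_one_sub_X_mul_one_sub_X :
    κ ((1 - X 1) * (1 - X 2))⁻¹ = rename (Function.Embedding.punit 1) (PowerSeries.mk 1) := by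
  rw [killCompl_inv, map_mul, map_sub, map_sub, map_one, killCompl_X_one, killCompl_X_two,
    sub_zero, one_mul, inv_one_sub_X_eq_rename_mk_one]

theorem Rmat_self_eq_sum (H : MvPowerSeries (Fin 2) ℂ) (n b : ℕ) :
    Rmat H n n b = ∑ q ∈ range (b + 1), (b.choose q : ℂ) * hcoeff H n q := by
  have hm : (Finsupp.single 0 n + Finsupp.single 1 (n - n) + Finsupp.single 2 b : Fin 3 →₀ ℕ) =
      Finsupp.embDomain (Fin.succAboveEmb 1) (Finsupp.single 0 n + Finsupp.single 1 b) := by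
    rw [Nat.sub_self, Finsupp.single_zero, add_zero, Finsupp.embDomain_add,
      Finsupp.embDomain_single, Finsupp.embDomain_single]
    rfl
  have hdeg : (Finsupp.single 0 n + Finsupp.single 1 (n - n) + Finsupp.single 2 b :
      Fin 3 →₀ ℕ).degree ≤ n + b := by
    simp
  calc Rmat H n n b
      = coeff (Finsupp.embDomain (Fin.succAboveEmb 1) (Finsupp.single 0 n + Finsupp.single 1 b))
          (((1 - X 1) * (1 - X 2))⁻¹ * comp2Trunc H (n + b) subx suby) := by
        rw [Rmat, FofH, coeff_mul_comp2_eq_coeff_mul_comp2Trunc _ constantCoeff_subx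
          constantCoeff_suby hdeg, hm]
    _ = ∑ q ∈ range (n + b + 1), hcoeff H n q *
          PowerSeries.coeff b (PowerSeries.mk 1 * (PowerSeries.X * PowerSeries.mk 1) ^ q) := by
        rw [← coeff_killCompl, map_mul, map_comp2Trunc, killCompl_subx, killCompl_suby,
          killCompl_inv_one_sub_X_mul_one_sub_X, coeff_rename_mul_comp2Trunc_X_rename H (by omega)]
    _ = ∑ q ∈ range (b + 1), (b.choose q : ℂ) * hcoeff H n q := by
        simp only [PowerSeries.coeff_mk_one_mul_X_mul_mk_one_pow, mul_comm (hcoeff H n _)]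
        exact sum_range_choose_mul_of_le _ (by omega)

end KillW2

/-- `Φ_F[uⁿ] = ∑_{b=0}^n C(n,b) R_n(n,b) u^b v^{n-b}` equals
`∑_{j=0}^n C(n,j) h_{nj} u^j (u+v)^{n-j}`, where `F` arises from `H`. -/
theorem Phi_F_apply_u_pow (H : MvPowerSeries (Fin 2) ℂ) (n : ℕ) :
    ∑ b ∈ Finset.range (n + 1),
        MvPolynomial.C ((n.choose b : ℂ) * Rmat H n n b) *
          MvPolynomial.X (0 : Fin 2) ^ b * MvPolynomial.X (1 : Fin 2) ^ (n - b) =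
      ∑ j ∈ Finset.range (n + 1),
        MvPolynomial.C ((n.choose j : ℂ) * hcoeff H n j) *
          MvPolynomial.X (0 : Fin 2) ^ j *
            (MvPolynomial.X (0 : Fin 2) + MvPolynomial.X (1 : Fin 2)) ^ (n - j) := by
  have hterm : ∀ b ∈ range (n + 1),
      MvPolynomial.C ((n.choose b : ℂ) * Rmat H n n b) *
          MvPolynomial.X (0 : Fin 2) ^ b * MvPolynomial.X (1 : Fin 2) ^ (n - b) =
        ∑ q ∈ range (n + 1), MvPolynomial.C (hcoeff H n q) *
          (((n.choose b * b.choose q : ℕ) : MvPolynomial (Fin 2) ℂ) *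
            MvPolynomial.X 0 ^ b * MvPolynomial.X 1 ^ (n - b)) := fun b hb => by
    rw [Rmat_self_eq_sum, ← sum_range_choose_mul_of_le _ (Nat.lt_succ_iff.1 (mem_range.1 hb)),
      mul_sum, map_sum, sum_mul, sum_mul]
    refine sum_congr rfl fun q _ => ?_
    simp only [map_mul, map_natCast, Nat.cast_mul]
    ring
  rw [sum_congr rfl hterm, sum_comm]
  refine sum_congr rfl fun q _ => ?_
  rw [← mul_sum, sum_choose_mul_choose_mul_pow_mul_pow, map_mul, map_natCast]
  ring
end

section
/- For m ∈ {±1, ±3} and formal variables w, t, the identity ((1+w)/(1−w))·(x²+y²)/2 − (2mxy√w)/(3(1−w)) + ((1+t)/(1−t))·y²/2 = ((1+z_m)/(1−z_m))·x²/2 + ((1−wt)/((1−w)(1−t)))·(y − mx(1−t)√w/(3(1−wt)))² holds, where z_m = w·(1−wt−m²(1−t)/9)/(1−wt−m²w(1−t)/9); in particular z_{±3} = wt. -/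
/-- For `m ∈ {±1, ±3}` and `w = s²`, `√w = s`, the identity
`(1+w)/(1-w)·(x²+y²)/2 - 2mxy√w/(3(1-w)) + (1+t)/(1-t)·y²/2
  = (1+z_m)/(1-z_m)·x²/2 + (1-wt)/((1-w)(1-t))·(y - mx(1-t)√w/(3(1-wt)))²`
holds, where `z_m = w(1-wt-m²(1-t)/9)/(1-wt-m²w(1-t)/9)`; in particular `z_{±3} = wt`. -/
theorem gaussian_completion_identity_m (x y s t m : ℝ)
    (hm : m = 1 ∨ m = -1 ∨ m = 3 ∨ m = -3)
    (hw : s ^ 2 ≠ 1) (ht : t ≠ 1) (hwt : s ^ 2 * t ≠ 1)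
    (hden : 1 - s ^ 2 * t - m ^ 2 * s ^ 2 * (1 - t) / 9 ≠ 0)
    (hz : s ^ 2 * (1 - s ^ 2 * t - m ^ 2 * (1 - t) / 9) /
        (1 - s ^ 2 * t - m ^ 2 * s ^ 2 * (1 - t) / 9) ≠ 1) :
    ((1 + s ^ 2) / (1 - s ^ 2) * (x ^ 2 + y ^ 2) / 2 -
          2 * m * x * y * s / (3 * (1 - s ^ 2)) + (1 + t) / (1 - t) * y ^ 2 / 2 =
        (1 + s ^ 2 * (1 - s ^ 2 * t - m ^ 2 * (1 - t) / 9) /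
              (1 - s ^ 2 * t - m ^ 2 * s ^ 2 * (1 - t) / 9)) /
            (1 - s ^ 2 * (1 - s ^ 2 * t - m ^ 2 * (1 - t) / 9) /
              (1 - s ^ 2 * t - m ^ 2 * s ^ 2 * (1 - t) / 9)) * x ^ 2 / 2 +
          (1 - s ^ 2 * t) / ((1 - s ^ 2) * (1 - t)) *
            (y - m * x * (1 - t) * s / (3 * (1 - s ^ 2 * t))) ^ 2) ∧
      (m = 3 ∨ m = -3 →
        s ^ 2 * (1 - s ^ 2 * t - m ^ 2 * (1 - t) / 9) /
            (1 - s ^ 2 * t - m ^ 2 * s ^ 2 * (1 - t) / 9) = s ^ 2 * t) := by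
  have h1 : (1 : ℝ) - s ^ 2 ≠ 0 := fun h => hw (by linarith)
  have h2 : (1 : ℝ) - t ≠ 0 := fun h => ht (by linarith)
  have h3 : (1 : ℝ) - s ^ 2 * t ≠ 0 := fun h => hwt (by linarith)
  constructor
  · have key : 1 - s ^ 2 * (1 - s ^ 2 * t - m ^ 2 * (1 - t) / 9) /
        (1 - s ^ 2 * t - m ^ 2 * s ^ 2 * (1 - t) / 9)
        = (1 - s ^ 2) * (1 - s ^ 2 * t) / (1 - s ^ 2 * t - m ^ 2 * s ^ 2 * (1 - t) / 9) := by
      rw [eq_div_iff hden, sub_mul, div_mul_cancel₀ _ hden]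
      ring
    have key2 : 1 + s ^ 2 * (1 - s ^ 2 * t - m ^ 2 * (1 - t) / 9) /
        (1 - s ^ 2 * t - m ^ 2 * s ^ 2 * (1 - t) / 9)
        = ((1 - s ^ 2 * t - m ^ 2 * s ^ 2 * (1 - t) / 9) +
            s ^ 2 * (1 - s ^ 2 * t - m ^ 2 * (1 - t) / 9)) /
            (1 - s ^ 2 * t - m ^ 2 * s ^ 2 * (1 - t) / 9) := by
      rw [add_div' _ _ _ hden, one_mul]
    rw [key, key2, div_div_div_cancel_right₀ hden]
    field_simp
    ring
  · intro h
    have hm2 : m ^ 2 = 9 := by rcases h with h | h <;> rw [h] <;> norm_num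
    rw [hm2] at hden ⊢
    rw [div_eq_iff hden]
    ring
end
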